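/- Kotel'nikov representation theorem (envelope–phase form). Let 0 ≤ f₁ < f₂ and let f : ℝ → ℝ be continuous and integrable, with integrable Fourier transform 𝓕f, and suppose that 𝓕f(ξ) = 0 whenever |ξ| < f₁ or |ξ| > f₂. Then there exist functions g : ℝ → ℝ with g ≥ 0 and θ : ℝ → ℝ such that f(t) = g(t) · cos( 2π·((f₁+f₂)/2)·t + θ(t) ) for every t ∈ ℝ, where moreover g(t) = |S(t)| and θ(t) = arg(S(t)) for a function S : ℝ → ℂ that is the inverse Fourier integral of an integrable function vanishing outside [−(f₂−f₁)/2, (f₂−f₁)/2]. -/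

import Mathlib

/-!
Since `f` is real, `𝓕 f` is Hermitian symmetric, so `f = Re 𝓕⁻ (2 · 1_{ξ ≥ 0} · 𝓕 f)`: only the
positive frequencies need to be kept, and by the band condition they lie in `[f₁, f₂]`.
Translating them by the centre frequency `f₀ = (f₁ + f₂) / 2` gives a spectrum `G` supported in
`[-(f₂ - f₁) / 2, (f₂ - f₁) / 2]` whose inverse transform `S` satisfies
`𝓕⁻ (2 · 1_{[f₁, f₂]} · 𝓕 f) t = S t · e^{2πi f₀ t}`. The polar form of `S t` turns the real part
of this into `|S t| cos (2π f₀ t + arg S t)`.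
-/

open MeasureTheory Real Complex Set
open scoped FourierTransform ComplexConjugate RealInnerProductSpace

theorem integral_eq_add_conj_setIntegral_Ioi {φ : ℝ → ℂ} (hφ : Integrable φ)
    (hsymm : ∀ x, φ (-x) = conj (φ x)) :
    ∫ x, φ x = (∫ x in Ioi 0, φ x) + conj (∫ x in Ioi 0, φ x) := by
  have hneg : ∫ x in Iic 0, φ x = conj (∫ x in Ioi 0, φ x) :=
    calc ∫ x in Iic 0, φ x = ∫ x in Ioi 0, φ (-x) := by rw [integral_comp_neg_Ioi, neg_zero]
      _ = conj (∫ x in Ioi 0, φ x) := by simp only [hsymm, integral_conj]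
  rw [← intervalIntegral.integral_Iic_add_Ioi hφ.integrableOn hφ.integrableOn, hneg, add_comm]

theorem indicator_Ici_eq_indicator_Icc {M : Type*} [Zero M] {a b : ℝ} (ha : 0 ≤ a) {g : ℝ → M}
    (hg : ∀ ξ, (|ξ| < a ∨ |ξ| > b) → g ξ = 0) : (Ici 0).indicator g = (Icc a b).indicator g := by
  ext ξ
  by_cases hξ : ξ ∈ Icc a b
  · rw [indicator_of_mem hξ, indicator_of_mem (mem_Ici.2 (ha.trans hξ.1))]
  · rw [indicator_of_notMem hξ, indicator_apply_eq_zero]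
    intro hξ₀
    rw [mem_Icc, not_and_or, not_le, not_le] at hξ
    exact hg ξ (by rwa [abs_of_nonneg hξ₀])

theorem Complex.re_mul_exp_ofReal_mul_I (z : ℂ) (α : ℝ) :
    (z * exp (α * I)).re = ‖z‖ * Real.cos (α + arg z) := by
  rw [mul_re, exp_ofReal_mul_I_re, exp_ofReal_mul_I_im, Real.cos_add, mul_sub,
    ← norm_mul_cos_arg, ← norm_mul_sin_arg]
  ring

namespace Real

section InnerProductSpace

variable {V : Type*} [NormedAddCommGroup V] [InnerProductSpace ℝ V] [MeasurableSpace V]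
  [BorelSpace V] [FiniteDimensional ℝ V]

theorem fourier_ofReal_neg (f : V → ℝ) (w : V) :
    𝓕 (fun v ↦ (f v : ℂ)) (-w) = conj (𝓕 (fun v ↦ (f v : ℂ)) w) := by
  simp only [fourier_eq, ← integral_conj, inner_neg_right, neg_neg, Circle.smul_def, smul_eq_mul,
    map_mul, conj_ofReal, ← Circle.coe_inv_eq_conj, ← AddChar.map_neg_eq_inv]

theorem fourierInv_comp_add_right {E : Type*} [NormedAddCommGroup E] [NormedSpace ℂ E]
    (f : V → E) (v₀ w : V) :
    𝓕⁻ (fun v ↦ f (v + v₀)) w = 𝐞 (-⟪v₀, w⟫) • 𝓕⁻ f w :=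
  congrFun (VectorFourier.fourierIntegral_comp_add_right 𝐞 volume (-innerₗ V) f v₀) w

end InnerProductSpace

theorem fourierInv_eq_re_fourierInv_indicator_Ici {g : ℝ → ℂ} (hg : Integrable g)
    (hsymm : ∀ ξ, g (-ξ) = conj (g ξ)) (t : ℝ) :
    𝓕⁻ g t = (𝓕⁻ ((Ici 0).indicator ((2 : ℂ) • g)) t).re := by
  set φ : ℝ → ℂ := fun ξ ↦ 𝐞 ⟪ξ, t⟫ • g ξ
  have hφ : Integrable φ := by
    simpa only [inner_neg_right, neg_neg] using (fourierIntegral_convergent_iff (-t)).2 hg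
  have hφsymm : ∀ ξ, φ (-ξ) = conj (φ ξ) := fun ξ ↦ by
    simp only [φ, hsymm, inner_neg_left, Circle.smul_def, smul_eq_mul, map_mul,
      ← Circle.coe_inv_eq_conj, ← AddChar.map_neg_eq_inv]
  have hpos : 𝓕⁻ ((Ici 0).indicator ((2 : ℂ) • g)) t = 2 * ∫ ξ in Ioi 0, φ ξ := by
    rw [fourierInv_eq, ← integral_Ici_eq_integral_Ioi, ← integral_const_mul,
      ← integral_indicator measurableSet_Ici]
    congr 1 with ξ
    by_cases hξ : ξ ∈ Ici 0 <;> simp [hξ, φ, Circle.smul_def, mul_left_comm]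
  rw [fourierInv_eq, integral_eq_add_conj_setIntegral_Ioi hφ hφsymm, hpos, add_conj]
  simp

end Real

theorem kotelnikov_envelope_phase_general
    (f₁ f₂ : ℝ) (hf₁ : 0 ≤ f₁)
    (f : ℝ → ℝ) (hcont : Continuous f)
    (hint : Integrable f)
    (hFint : Integrable (𝓕 (fun t : ℝ => (f t : ℂ))))
    (hband : ∀ ξ : ℝ, (|ξ| < f₁ ∨ |ξ| > f₂) → 𝓕 (fun t : ℝ => (f t : ℂ)) ξ = 0) :
    ∃ (g θ : ℝ → ℝ) (S : ℝ → ℂ),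
      (∀ t : ℝ, 0 ≤ g t) ∧
      (∃ G : ℝ → ℂ, Integrable G ∧
        (∀ ξ : ℝ, ξ ∉ Set.Icc (-((f₂ - f₁) / 2)) ((f₂ - f₁) / 2) → G ξ = 0) ∧
        S = 𝓕⁻ G) ∧
      (∀ t : ℝ, g t = ‖S t‖) ∧
      (∀ t : ℝ, θ t = Complex.arg (S t)) ∧
      (∀ t : ℝ, f t = g t * Real.cos (2 * Real.pi * ((f₁ + f₂) / 2) * t + θ t)) := by
  set F := 𝓕 (fun t : ℝ => (f t : ℂ))
  set f₀ := (f₁ + f₂) / 2 with hf₀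
  set H := (Icc f₁ f₂).indicator ((2 : ℂ) • F)
  set S := 𝓕⁻ (fun ξ ↦ H (ξ + f₀))
  refine ⟨fun t ↦ ‖S t‖, fun t ↦ arg (S t), S, fun _ ↦ norm_nonneg _, ⟨_, ?_, ?_, rfl⟩,
    fun _ ↦ rfl, fun _ ↦ rfl, fun t ↦ ?_⟩
  · exact ((hFint.smul (2 : ℂ)).indicator measurableSet_Icc).comp_add_right f₀
  · intro ξ hξ
    exact indicator_of_notMem (fun h ↦ hξ ⟨by linarith [h.1], by linarith [h.2]⟩) _
  have hH : (Ici 0).indicator ((2 : ℂ) • F) = H :=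
    indicator_Ici_eq_indicator_Icc hf₁ fun ξ hξ ↦ by simp [hband ξ hξ]
  have hinv : 𝓕⁻ F t = f t :=
    hint.ofReal.fourierInv_fourier_eq hFint (continuous_ofReal.comp hcont).continuousAt
  have hmod : 𝓕⁻ H t = S t * exp (↑(2 * π * f₀ * t) * I) := by
    rw [show S t = _ from fourierInv_comp_add_right H f₀ t, Circle.smul_def, fourierChar_apply,
      smul_eq_mul, mul_right_comm, ← Complex.exp_add, RCLike.inner_apply', conj_trivial,
      ← add_mul, ← ofReal_add, show 2 * π * -(f₀ * t) + 2 * π * f₀ * t = 0 by ring, ofReal_zero,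
      zero_mul, Complex.exp_zero, one_mul]
  rw [← ofReal_inj, ← hinv, fourierInv_eq_re_fourierInv_indicator_Ici hFint
    (fourier_ofReal_neg f) t, hH, hmod, re_mul_exp_ofReal_mul_I]

/-- **Kotel'nikov representation theorem (envelope–phase form).**
A real bandpass signal confined to the band `[f₁, f₂]` admits a representation
`f(t) = g(t) · cos(2π·((f₁+f₂)/2)·t + θ(t))` where `g ≥ 0` and `θ` are the modulus and
argument of a complex baseband signal `S`, i.e. the inverse Fourier integral of an integrable
function supported in `[-(f₂-f₁)/2, (f₂-f₁)/2]`. -/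
theorem kotelnikov_envelope_phase
    (f₁ f₂ : ℝ) (hf₁ : 0 ≤ f₁) (h₁₂ : f₁ < f₂)
    (f : ℝ → ℝ) (hcont : Continuous f)
    (hint : Integrable f)
    (hFint : Integrable (𝓕 (fun t : ℝ => (f t : ℂ))))
    (hband : ∀ ξ : ℝ, (|ξ| < f₁ ∨ |ξ| > f₂) → 𝓕 (fun t : ℝ => (f t : ℂ)) ξ = 0) :
    ∃ (g θ : ℝ → ℝ) (S : ℝ → ℂ),
      (∀ t : ℝ, 0 ≤ g t) ∧
      (∃ G : ℝ → ℂ, Integrable G ∧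
        (∀ ξ : ℝ, ξ ∉ Set.Icc (-((f₂ - f₁) / 2)) ((f₂ - f₁) / 2) → G ξ = 0) ∧
        S = 𝓕⁻ G) ∧
      (∀ t : ℝ, g t = ‖S t‖) ∧
      (∀ t : ℝ, θ t = Complex.arg (S t)) ∧
      (∀ t : ℝ, f t = g t * Real.cos (2 * Real.pi * ((f₁ + f₂) / 2) * t + θ t)) :=
  kotelnikov_envelope_phase_general f₁ f₂ hf₁ f hcont hint hFint hband
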